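/- (Frequency-domain form of the spatial degradation operator) Let n = d·m, let F be the normalized DFT matrix of size n, let D ∈ ℂ^{n×n} be diagonal, set B = F D F^H, let S̄ ∈ ℂ^{n×n} be the sampling mask, and set D̄ = D(1_d ⊗ I_m) ∈ ℂ^{n×m}. Then F^H (B S̄ B^H) F = (1/d)·D̄ D̄^H. -/
import Mathlib


open Matrix
open scoped Kronecker

/-- The normalized DFT matrix of size `n`, with entries
`F j k = n^{-1/2} exp(-2πi·jk/n)`. -/
noncomputable def dftMatrix (n : ℕ) : Matrix (Fin n) (Fin n) ℂ :=
  Matrix.of fun j k : Fin n =>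
    ((Real.sqrt n : ℂ))⁻¹ *
      Complex.exp (-2 * (Real.pi : ℂ) * Complex.I * (j.val : ℂ) * (k.val : ℂ) / (n : ℂ))

/-- The sampling mask `S̄ ∈ ℂ^{n×n}`: the diagonal matrix with `(S̄)_{jj} = 1`
if `d ∣ j` and `0` otherwise. -/
noncomputable def samplingMask (n d : ℕ) : Matrix (Fin n) (Fin n) ℂ :=
  Matrix.diagonal fun j : Fin n => if d ∣ (j : ℕ) then 1 else 0

/-- The all-ones column vector `1_d`, as a `d × 1` matrix. -/
noncomputable def onesCol (d : ℕ) : Matrix (Fin d) (Fin 1) ℂ :=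
  Matrix.of fun _ _ => 1

/-- The `n × m` matrix `1_d ⊗ I_m` (with `n = d·m`), the index `i ∈ {0,…,n−1}`
being identified with the pair `(⌊i/m⌋, i mod m)` via `finProdFinEquiv`. -/
noncomputable def onesKronId (d m : ℕ) : Matrix (Fin (d * m)) (Fin m) ℂ :=
  (onesCol d ⊗ₖ (1 : Matrix (Fin m) (Fin m) ℂ)).submatrix
    (finProdFinEquiv : Fin d × Fin m ≃ Fin (d * m)).symm
    (fun r : Fin m => ((0 : Fin 1), r))


open Complex Finset

open Complex Finset

lemma sum_exp_root (N : ℕ) (hN : 0 < N) (a : ℤ) :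
    ∑ l : Fin N, Complex.exp (2 * Real.pi * Complex.I * a * l / N)
      = if (N : ℤ) ∣ a then (N : ℂ) else 0 := by
  have key : ∀ l : Fin N, Complex.exp (2 * Real.pi * Complex.I * a * l / N)
      = Complex.exp (2 * Real.pi * Complex.I * a / N) ^ (l : ℕ) := by
    intro l
    rw [← Complex.exp_nat_mul]
    ring_nf
  simp_rw [key]
  have hNC : (N : ℂ) ≠ 0 := Nat.cast_ne_zero.mpr hN.ne'
  by_cases h : (N : ℤ) ∣ a
  · obtain ⟨c, rfl⟩ := h
    have h1 : (2 * Real.pi * Complex.I * ((N : ℤ) * c : ℤ) / N : ℂ) = c * (2 * Real.pi * Complex.I) := by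
      push_cast
      field_simp
    rw [if_pos ⟨c, rfl⟩, h1, Complex.exp_int_mul_two_pi_mul_I]
    simp
  · rw [if_neg h]
    have hω : Complex.exp (2 * Real.pi * Complex.I * a / N) ≠ 1 := by
      intro hc
      rw [Complex.exp_eq_one_iff] at hc
      obtain ⟨k, hk⟩ := hc
      apply h ⟨k, ?_⟩
      have hpi : (Real.pi : ℂ) ≠ 0 := Complex.ofReal_ne_zero.mpr Real.pi_ne_zero
      have h2 : (2 : ℂ) * Real.pi * Complex.I ≠ 0 := by
        simp [Complex.I_ne_zero, hpi]
      have : (a : ℂ) = N * k := by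
        field_simp at hk
        have h3 : (2 : ℂ) * Real.pi * Complex.I * a = 2 * Real.pi * Complex.I * (N * k) := by
          rw [hk]
        exact mul_left_cancel₀ h2 h3
      exact_mod_cast this
    have hωN : Complex.exp (2 * Real.pi * Complex.I * a / N) ^ N = 1 := by
      rw [← Complex.exp_nat_mul]
      have : (N : ℂ) * (2 * Real.pi * Complex.I * a / N) = a * (2 * Real.pi * Complex.I) := by
        field_simp
      rw [this, Complex.exp_int_mul_two_pi_mul_I]
    rw [Fin.sum_univ_eq_sum_range, geom_sum_eq hω, hωN]
    simp

lemma dft_conj_mul (N : ℕ) (hN : 0 < N) (l j k : Fin N) :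
    (starRingEnd ℂ) (dftMatrix N l j) * dftMatrix N l k
      = (N : ℂ)⁻¹ * Complex.exp (2 * Real.pi * Complex.I * (((((j : ℕ) : ℤ) - ((k : ℕ) : ℤ)) : ℤ) : ℂ) * l / N) := by
  have hsq : ((Real.sqrt N : ℂ))⁻¹ * ((Real.sqrt N : ℂ))⁻¹ = (N : ℂ)⁻¹ := by
    rw [← mul_inv]
    congr 1
    rw [← Complex.ofReal_mul, Real.mul_self_sqrt (Nat.cast_nonneg N)]
    norm_num
  simp only [dftMatrix, Matrix.of_apply, _root_.map_mul, map_inv₀, Complex.conj_ofReal,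
    ← Complex.exp_conj, map_div₀, Complex.conj_I, map_neg, map_ofNat,
    Complex.conj_natCast]
  rw [mul_mul_mul_comm _ _ ((Real.sqrt (N:ℝ) : ℂ))⁻¹, hsq, ← Complex.exp_add]
  congr 2
  have hNC : (N : ℂ) ≠ 0 := Nat.cast_ne_zero.mpr hN.ne'
  push_cast
  field_simp
  ring

lemma dft_unitary (N : ℕ) : (dftMatrix N)ᴴ * dftMatrix N = 1 := by
  rcases Nat.eq_zero_or_pos N with h0 | hN
  · subst h0; ext j k; exact j.elim0
  ext j k
  rw [Matrix.mul_apply]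
  simp only [Matrix.conjTranspose_apply, Complex.star_def, dft_conj_mul N hN]
  rw [← Finset.mul_sum, sum_exp_root N hN _]
  by_cases h : j = k
  · subst h
    rw [if_pos (by simp), Matrix.one_apply_eq]
    exact inv_mul_cancel₀ (Nat.cast_ne_zero.mpr hN.ne')
  · rw [if_neg, Matrix.one_apply_ne h, mul_zero]
    intro hdvd
    apply h
    have hj := j.isLt; have hk := k.isLt
    have h0 : (((j : ℕ) : ℤ) - (k : ℕ)) = 0 := by
      refine Int.eq_zero_of_abs_lt_dvd hdvd ?_
      rw [abs_sub_lt_iff]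
      constructor <;> omega
    ext
    omega

lemma sum_dvd (d m : ℕ) (hd : 0 < d) (f : Fin (d * m) → ℂ) :
    ∑ l : Fin (d * m), (if d ∣ (l : ℕ) then f l else 0)
      = ∑ t : Fin m, f ⟨d * t, by exact Nat.mul_lt_mul_of_pos_left t.isLt hd⟩ := by
  rw [← Finset.sum_filter]
  refine Finset.sum_bij' (i := fun l hl => (⟨(l : ℕ) / d, ?_⟩ : Fin m))
    (j := fun t _ => (⟨d * (t : ℕ), ?_⟩ : Fin (d * m))) ?_ ?_ ?_ ?_ ?_
  · simp only [Finset.mem_filter] at hl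
    obtain ⟨q, hq⟩ := hl.2
    have := l.isLt
    refine Nat.div_lt_of_lt_mul ?_
    omega
  · exact Nat.mul_lt_mul_of_pos_left t.isLt hd
  · intro a ha; exact Finset.mem_univ _
  · intro t ht
    simp [Nat.dvd_mul_right]
  · intro l hl
    simp only [Finset.mem_filter] at hl
    obtain ⟨q, hq⟩ := hl.2
    ext
    simp [hq, Nat.mul_div_cancel_left _ hd]
  · intro t ht
    ext
    simp [Nat.mul_div_cancel_left _ hd]
  · intro l hl
    simp only [Finset.mem_filter] at hl
    obtain ⟨q, hq⟩ := hl.2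
    congr 1
    ext
    simp [hq, Nat.mul_div_cancel_left _ hd]

lemma onesKronId_apply (d m : ℕ) (j : Fin (d * m)) (r : Fin m) :
    onesKronId d m j r = if (j : ℕ) % m = (r : ℕ) then 1 else 0 := by
  simp only [onesKronId, Matrix.submatrix_apply, Matrix.kroneckerMap_apply, onesCol,
    Matrix.of_apply, one_mul, finProdFinEquiv, Equiv.coe_fn_symm_mk, Matrix.one_apply,
    Fin.ext_iff, Fin.coe_modNat]

lemma FSF (d m : ℕ) (hd : 0 < d) (hm : 0 < m) :
    (dftMatrix (d * m))ᴴ * (samplingMask (d * m) d * dftMatrix (d * m))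
      = (d : ℂ)⁻¹ • (onesKronId d m * (onesKronId d m)ᴴ) := by
  have hn : 0 < d * m := Nat.mul_pos hd hm
  have hdC : (d : ℂ) ≠ 0 := Nat.cast_ne_zero.mpr hd.ne'
  have hmC : (m : ℂ) ≠ 0 := Nat.cast_ne_zero.mpr hm.ne'
  ext j k
  rw [Matrix.mul_apply]
  simp only [samplingMask, Matrix.diagonal_mul, Matrix.conjTranspose_apply, Complex.star_def,
    ite_mul, one_mul, zero_mul, mul_ite, mul_zero]
  rw [sum_dvd d m hd]
  have hterm : ∀ t : Fin m,
      (starRingEnd ℂ) (dftMatrix (d * m) ⟨d * t, Nat.mul_lt_mul_of_pos_left t.isLt hd⟩ j) *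
        dftMatrix (d * m) ⟨d * t, Nat.mul_lt_mul_of_pos_left t.isLt hd⟩ k
      = ((d : ℂ) * m)⁻¹ *
          Complex.exp (2 * Real.pi * Complex.I *
            (((((j : ℕ) : ℤ) - ((k : ℕ) : ℤ)) : ℤ) : ℂ) * (t : ℕ) / m) := by
    intro t
    rw [dft_conj_mul (d * m) hn]
    push_cast
    congr 1
    congr 1
    field_simp
  simp_rw [hterm]
  rw [← Finset.mul_sum, sum_exp_root m hm]
  have hiff : ((m : ℤ) ∣ ((j : ℕ) : ℤ) - ((k : ℕ) : ℤ)) ↔ ((j : ℕ) % m = (k : ℕ) % m) := by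
    rw [Int.dvd_iff_emod_eq_zero, ← Int.emod_eq_emod_iff_emod_sub_eq_zero]
    omega
  have key : ∀ x : Fin m, onesKronId d m j x * (starRingEnd ℂ) (onesKronId d m k x)
      = if (⟨(k : ℕ) % m, Nat.mod_lt _ hm⟩ : Fin m) = x
          then (if (j : ℕ) % m = (k : ℕ) % m then (1 : ℂ) else 0) else 0 := by
    intro x
    rw [onesKronId_apply, onesKronId_apply]
    simp only [Fin.ext_iff]
    by_cases h1 : (k : ℕ) % m = (x : ℕ)
    · by_cases h2 : (j : ℕ) % m = (x : ℕ)
      · simp [h1, h2, h2.trans h1.symm]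
      · have h3 : ¬ (j : ℕ) % m = (k : ℕ) % m := fun hc => h2 (hc.trans h1)
        simp [h1, h2, h3]
    · simp [h1]
  have hRHS : ((d : ℂ)⁻¹ • (onesKronId d m * (onesKronId d m)ᴴ)) j k
      = if (j : ℕ) % m = (k : ℕ) % m then (d : ℂ)⁻¹ else 0 := by
    rw [Matrix.smul_apply, Matrix.mul_apply]
    simp only [Matrix.conjTranspose_apply, Complex.star_def]
    simp_rw [key]
    rw [Finset.sum_ite_eq]
    simp only [Finset.mem_univ, if_true]
    split_ifs <;> simp
  rw [hRHS]
  by_cases h : (j : ℕ) % m = (k : ℕ) % m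
  · rw [if_pos (hiff.mpr h), if_pos h]
    field_simp
  · rw [if_neg (fun hc => h (hiff.mp hc)), if_neg h, mul_zero]

/-- frequency-domain form of the spatial degradation operator:
with `n = d·m`, `F` the normalized DFT matrix, `D` diagonal, `B = F D Fᴴ`,
`S̄` the sampling mask and `D̄ = D(1_d ⊗ I_m)`, one has
`Fᴴ (B S̄ Bᴴ) F = (1/d)·D̄ D̄ᴴ`. -/
theorem stmt8 (d m : ℕ) (v : Fin (d * m) → ℂ)
    (F D B S : Matrix (Fin (d * m)) (Fin (d * m)) ℂ)
    (hF : F = dftMatrix (d * m)) (hD : D = Matrix.diagonal v)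
    (hB : B = F * D * Fᴴ) (hS : S = samplingMask (d * m) d)
    (Dbar : Matrix (Fin (d * m)) (Fin m) ℂ) (hDbar : Dbar = D * onesKronId d m) :
    Fᴴ * (B * S * Bᴴ) * F = ((d : ℂ))⁻¹ • (Dbar * Dbarᴴ) := by
  rcases Nat.eq_zero_or_pos d with hd | hd
  · subst hd; ext i k; exact absurd i.isLt (by omega)
  rcases Nat.eq_zero_or_pos m with hm | hm
  · subst hm; ext i k; exact absurd i.isLt (by omega)
  subst hF hB hS hDbar
  have hFF : (dftMatrix (d * m))ᴴ * dftMatrix (d * m) = 1 := dft_unitary _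
  have expand : (dftMatrix (d * m))ᴴ *
        (dftMatrix (d * m) * D * (dftMatrix (d * m))ᴴ * samplingMask (d * m) d *
          (dftMatrix (d * m) * D * (dftMatrix (d * m))ᴴ)ᴴ) * dftMatrix (d * m)
      = ((dftMatrix (d * m))ᴴ * dftMatrix (d * m)) *
          (D * (((dftMatrix (d * m))ᴴ * (samplingMask (d * m) d * dftMatrix (d * m))) *
            (Dᴴ * ((dftMatrix (d * m))ᴴ * dftMatrix (d * m))))) := by
    simp only [Matrix.conjTranspose_mul, Matrix.conjTranspose_conjTranspose, Matrix.mul_assoc]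
  rw [expand, hFF, Matrix.one_mul, Matrix.mul_one, FSF d m hd hm]
  simp only [Matrix.conjTranspose_mul, Matrix.smul_mul, Matrix.mul_smul, Matrix.mul_assoc]
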